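/- For the path graph P_n on n vertices, there exists a good system of categories on P_n with membership dimension exactly diam(P_n) = n − 1, and no good system achieves a smaller membership dimension; that is, the minimum membership dimension of a good system of categories on P_n equals n − 1. -/

import Mathlib

open Finset SimpleGraph

variable {V : Type*}

def catDist [DecidableEq V] (S : Finset (Finset V)) (s t : V) : ℕ :=
  (S.filter fun C => t ∈ C ∧ s ∉ C).card

def IsGoodSystem [DecidableEq V] (G : SimpleGraph V) (S : Finset (Finset V)) : Prop :=
  (∀ C ∈ S, (G.induce (C : Set V)).Connected) ∧
    ∀ s t : V, s ≠ t → ∃ u, G.Adj s u ∧ catDist S u t < catDist S s t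

def memdim [DecidableEq V] [Fintype V] (S : Finset (Finset V)) : ℕ :=
  univ.sup fun v : V => (S.filter fun C => v ∈ C).card

noncomputable def graphDiam [Fintype V] (G : SimpleGraph V) : ℕ :=
  univ.sup fun p : V × V => G.dist p.1 p.2

noncomputable def minMemdim (V : Type*) [DecidableEq V] [Fintype V] (G : SimpleGraph V) : ℕ :=
  sInf {m | ∃ S : Finset (Finset V), IsGoodSystem G S ∧ memdim S = m}

section Aux

variable {n : ℕ}

lemma lb_aux (S : Finset (Finset (Fin n)))
    (hS : ∀ s t : Fin n, s ≠ t → ∃ u, (pathGraph n).Adj s u ∧ catDist S u t < catDist S s t) :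
    ∀ k (s t : Fin n), catDist S s t ≤ k → t.val - s.val ≤ k ∧ s.val - t.val ≤ k := by
  intro k
  induction k with
  | zero =>
    intro s t h
    rcases eq_or_ne s t with rfl | hne
    · omega
    · obtain ⟨u, _, hlt⟩ := hS s t hne; omega
  | succ k ih =>
    intro s t h
    rcases eq_or_ne s t with rfl | hne
    · omega
    · obtain ⟨u, hadj, hlt⟩ := hS s t hne
      have := ih u t (by omega)
      rw [pathGraph_adj] at hadj
      omega

def Fsuf (n i : ℕ) : Finset (Fin n) := univ.filter fun v => i ≤ v.val
def Fpre (n i : ℕ) : Finset (Fin n) := univ.filter fun v => v.val ≤ i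

def goodS (n : ℕ) : Finset (Finset (Fin n)) :=
  ((Finset.Ico 1 n).image (Fsuf n)) ∪ ((Finset.range (n-1)).image (Fpre n))

lemma fsuf_injOn : Set.InjOn (Fsuf n) (Finset.Ico 1 n) := by
  intro i hi j hj h
  simp only [coe_Ico, Set.mem_Ico] at hi hj
  have h1 : (⟨i, hi.2⟩ : Fin n) ∈ Fsuf n i := by simp [Fsuf]
  have h2 : (⟨j, hj.2⟩ : Fin n) ∈ Fsuf n j := by simp [Fsuf]
  rw [h] at h1; rw [← h] at h2
  simp [Fsuf] at h1 h2
  omega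

lemma fpre_injOn : Set.InjOn (Fpre n) (Finset.range (n-1)) := by
  intro i hi j hj h
  simp only [coe_range, Set.mem_Iio] at hi hj
  have h1 : (⟨i, by omega⟩ : Fin n) ∈ Fpre n i := by simp [Fpre]
  have h2 : (⟨j, by omega⟩ : Fin n) ∈ Fpre n j := by simp [Fpre]
  rw [h] at h1; rw [← h] at h2
  simp [Fpre] at h1 h2
  omega

lemma disj (hn : 1 ≤ n) : Disjoint ((Finset.Ico 1 n).image (Fsuf n)) ((Finset.range (n-1)).image (Fpre n)) := by
  rw [Finset.disjoint_left]
  rintro C hC hC'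
  simp only [mem_image, mem_Ico, mem_range] at hC hC'
  obtain ⟨i, hi, rfl⟩ := hC
  obtain ⟨j, hj, hij⟩ := hC'
  have h1 : (⟨0, hn⟩ : Fin n) ∈ Fpre n j := by simp [Fpre]
  rw [hij] at h1
  simp [Fsuf] at h1
  omega

lemma card_filter_goodS (hn : 1 ≤ n) (P : Finset (Fin n) → Prop) [DecidablePred P] :
    ((goodS n).filter P).card =
      ((Finset.Ico 1 n).filter fun i => P (Fsuf n i)).card +
      ((Finset.range (n-1)).filter fun i => P (Fpre n i)).card := by
  rw [goodS, filter_union, card_union_of_disjoint, Finset.filter_image, Finset.filter_image,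
    Finset.card_image_of_injOn (fsuf_injOn.mono (by intro x hx; simp_all)),
    Finset.card_image_of_injOn (fpre_injOn.mono (by intro x hx; simp_all))]
  exact Finset.disjoint_filter_filter (disj hn)

lemma catDist_goodS (hn : 1 ≤ n) (s t : Fin n) :
    ((goodS n).filter fun C => t ∈ C ∧ s ∉ C).card = (t.val - s.val) + (s.val - t.val) := by
  rw [card_filter_goodS hn]
  have e1 : ((Finset.Ico 1 n).filter fun i => t ∈ Fsuf n i ∧ s ∉ Fsuf n i)
      = Finset.Ioc s.val t.val := by
    ext i
    simp only [mem_filter, mem_Ico, mem_Ioc, Fsuf, mem_univ, true_and, not_le]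
    have := t.isLt
    constructor
    · rintro ⟨_, h2, h3⟩; omega
    · intro h; refine ⟨⟨by omega, by omega⟩, by omega, by omega⟩
  have e2 : ((Finset.range (n-1)).filter fun i => t ∈ Fpre n i ∧ s ∉ Fpre n i)
      = Finset.Ico t.val s.val := by
    ext i
    simp only [mem_filter, mem_range, mem_Ico, Fpre, mem_univ, true_and, not_le]
    have := s.isLt
    constructor
    · rintro ⟨_, h2, h3⟩; omega
    · intro h; refine ⟨by omega, by omega, by omega⟩
  rw [e1, e2, Nat.card_Ioc, Nat.card_Ico]

lemma memdim_count (hn : 1 ≤ n) (v : Fin n) :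
    ((goodS n).filter fun C => v ∈ C).card = n - 1 := by
  rw [card_filter_goodS hn]
  have e1 : ((Finset.Ico 1 n).filter fun i => v ∈ Fsuf n i) = Finset.Icc 1 v.val := by
    ext i
    simp only [mem_filter, mem_Ico, mem_Icc, Fsuf, mem_univ, true_and]
    have := v.isLt; omega
  have e2 : ((Finset.range (n-1)).filter fun i => v ∈ Fpre n i) = Finset.Ico v.val (n-1) := by
    ext i
    simp only [mem_filter, mem_range, mem_Ico, Fpre, mem_univ, true_and]
    omega
  rw [e1, e2, Nat.card_Icc, Nat.card_Ico]
  have := v.isLt; omega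

lemma interval_connected (C : Finset (Fin n)) (hne : C.Nonempty)
    (hint : ∀ x z : Fin n, x ∈ C → z ∈ C → ∀ y : Fin n, x.val ≤ y.val → y.val ≤ z.val → y ∈ C) :
    ((pathGraph n).induce (C : Set (Fin n))).Connected := by
  have key : ∀ d (x y : (C : Set (Fin n))), x.1.val ≤ y.1.val → y.1.val - x.1.val ≤ d →
      ((pathGraph n).induce (C : Set (Fin n))).Reachable x y := by
    intro d
    induction d with
    | zero =>
      intro x y h1 h2
      have : x = y := by
        ext1; ext; omega
      rw [this]
    | succ d ih =>
      intro x y h1 h2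
      rcases eq_or_lt_of_le h1 with heq | hlt
      · have : x = y := by ext1; ext; exact heq
        rw [this]
      · have hx1 : x.1.val + 1 < n := by have := y.1.isLt; omega
        have hmem : (⟨x.1.val + 1, hx1⟩ : Fin n) ∈ C := by
          apply hint x.1 y.1 x.2 y.2
          · simp
          · simp; omega
        have hadj : ((pathGraph n).induce (C : Set (Fin n))).Adj x ⟨⟨x.1.val + 1, hx1⟩, hmem⟩ := by
          simp only [comap_adj, Function.Embedding.coe_subtype, pathGraph_adj]
          left; trivial
        exact hadj.reachable.trans (ih ⟨⟨x.1.val + 1, hx1⟩, hmem⟩ y (by simp; omega) (by simp; omega))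
  obtain ⟨v, hv⟩ := hne
  rw [connected_iff]
  refine ⟨?_, ⟨⟨v, hv⟩⟩⟩
  intro x y
  rcases le_total x.1.val y.1.val with h | h
  · exact key _ x y h le_rfl
  · exact (key _ y x h le_rfl).symm

end Aux

theorem stmt3 (n : ℕ) (hn : 1 ≤ n) :
    (∃ S : Finset (Finset (Fin n)), IsGoodSystem (pathGraph n) S ∧ memdim S = n - 1) ∧
    (∀ S : Finset (Finset (Fin n)), IsGoodSystem (pathGraph n) S → n - 1 ≤ memdim S) := by
  constructor
  · refine ⟨goodS n, ⟨?_, ?_⟩, ?_⟩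
    · -- connectivity
      intro C hC
      simp only [goodS, mem_union, mem_image, mem_Ico, mem_range] at hC
      rcases hC with ⟨i, hi, rfl⟩ | ⟨i, hi, rfl⟩
      · apply interval_connected
        · exact ⟨⟨i, hi.2⟩, by simp [Fsuf]⟩
        · intro x z hx hz y h1 h2
          simp only [Fsuf, mem_filter, mem_univ, true_and] at hx hz ⊢
          omega
      · apply interval_connected
        · exact ⟨⟨0, hn⟩, by simp [Fpre]⟩
        · intro x z hx hz y h1 h2
          simp only [Fpre, mem_filter, mem_univ, true_and] at hx hz ⊢
          omega
    · -- goodness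
      intro s t hst
      have hst' : s.val ≠ t.val := fun h => hst (Fin.ext h)
      rcases lt_or_gt_of_ne hst' with h | h
      · have hu : s.val + 1 < n := lt_of_le_of_lt h t.isLt
        refine ⟨⟨s.val + 1, hu⟩, ?_, ?_⟩
        · rw [pathGraph_adj]; left; rfl
        · show catDist (goodS n) _ t < catDist (goodS n) s t
          unfold catDist
          rw [catDist_goodS hn, catDist_goodS hn]
          simp only
          omega
      · have hu : s.val - 1 < n := by omega
        refine ⟨⟨s.val - 1, hu⟩, ?_, ?_⟩
        · rw [pathGraph_adj]; right; simp; omega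
        · show catDist (goodS n) _ t < catDist (goodS n) s t
          unfold catDist
          rw [catDist_goodS hn, catDist_goodS hn]
          simp only
          omega
    · -- memdim
      unfold memdim
      apply Nat.le_antisymm
      · apply Finset.sup_le
        intro v _
        exact (memdim_count hn v).le
      · have h0 := memdim_count hn ⟨0, hn⟩
        rw [← h0]
        exact Finset.le_sup (f := fun v : Fin n => ((goodS n).filter fun C => v ∈ C).card)
          (mem_univ (⟨0, hn⟩ : Fin n))
  · intro S hS
    let s : Fin n := ⟨0, hn⟩
    let t : Fin n := ⟨n - 1, by omega⟩
    have h1 := (lb_aux S hS.2 (catDist S s t) s t le_rfl).1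
    have hv1 : t.val = n - 1 := rfl
    have hv2 : s.val = 0 := rfl
    have h2 : catDist S s t ≤ (S.filter fun C => t ∈ C).card := by
      apply Finset.card_le_card
      intro C hC
      rw [Finset.mem_filter] at hC ⊢
      exact ⟨hC.1, hC.2.1⟩
    have h3 : (S.filter fun C => t ∈ C).card ≤ memdim S := by
      unfold memdim
      exact Finset.le_sup (f := fun v : Fin n => (S.filter fun C => v ∈ C).card) (mem_univ t)
    omega
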